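/- arXiv:math/0504243 — 2 statements merged into one kernel-verified Lean document; each statement's English description precedes it below -/
import Mathlib

section
/- Let V be an open subset of a finite-dimensional real normed space and φ : V → ℝ a differentiable function such that the closure of {x ∈ V : φ(x) < r} is compact and contained in V. Then every nonempty connected component of {x ∈ V : φ(x) < r} contains a critical point of φ (a point where the derivative of φ vanishes). -/
theorem stmt_6 {E : Type*} [NormedAddCommGroup E] [NormedSpace ℝ E] [FiniteDimensional ℝ E]
    (V : Set E) (hV : IsOpen V) (φ : E → ℝ)
    (hφ : ∀ x ∈ V, DifferentiableAt ℝ φ x) (r : ℝ)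
    (hcpt : IsCompact (closure {x ∈ V | φ x < r}))
    (hsub : closure {x ∈ V | φ x < r} ⊆ V) :
    ∀ x ∈ {x ∈ V | φ x < r},
      ∃ y ∈ connectedComponentIn {x ∈ V | φ x < r} x, fderiv ℝ φ y = 0 := by
  intro x hx
  set S : Set E := {x ∈ V | φ x < r} with hS
  have hcontV : ContinuousOn φ V := fun z hz => (hφ z hz).continuousAt.continuousWithinAt
  have hSopen : IsOpen S := by
    have : S = V ∩ φ ⁻¹' Set.Iio r := rfl
    rw [this]
    exact hcontV.isOpen_inter_preimage hV isOpen_Iio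
  set C := connectedComponentIn S x with hC
  have hCopen : IsOpen C := hSopen.connectedComponentIn
  have hCS : C ⊆ S := connectedComponentIn_subset S x
  have hCne : C.Nonempty := ⟨x, mem_connectedComponentIn hx⟩
  have hclC : IsCompact (closure C) :=
    hcpt.of_isClosed_subset isClosed_closure (closure_mono hCS)
  have hclCV : closure C ⊆ V := (closure_mono hCS).trans hsub
  have hcont : ContinuousOn φ (closure C) := hcontV.mono hclCV
  obtain ⟨y, hy, hmin⟩ := hclC.exists_isMinOn hCne.closure hcont
  have hyS : y ∈ S := by
    refine ⟨hclCV hy, ?_⟩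
    exact lt_of_le_of_lt (hmin (subset_closure (mem_connectedComponentIn hx))) hx.2
  -- y ∈ closure C and y ∈ S imply y ∈ C
  have hyC : y ∈ C := by
    have hUopen : IsOpen (connectedComponentIn S y) := hSopen.connectedComponentIn
    have hymem : y ∈ connectedComponentIn S y := mem_connectedComponentIn hyS
    obtain ⟨z, hzU, hzC⟩ :=
      (mem_closure_iff.mp hy) _ hUopen hymem
    have h1 : connectedComponentIn S y = connectedComponentIn S z :=
      connectedComponentIn_eq hzU
    have h2 : C = connectedComponentIn S z := connectedComponentIn_eq hzC
    rw [h2, ← h1]; exact hymem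
  refine ⟨y, hyC, ?_⟩
  have hlocal : IsLocalMin φ y :=
    (hmin.on_subset subset_closure).isLocalMin (hCopen.mem_nhds hyC)
  exact hlocal.fderiv_eq_zero
end

section
/- Let φ : V → ℝ be continuous on an open set V ⊆ ℂ², let lₙ be affine complex lines converging to an affine line l (in the sense that lₙ = {aₙ + ζvₙ}, aₙ → a, vₙ → v ≠ 0, l = {a + ζv}), and let Ω be an open set containing the compact set l ∩ {φ ≤ r}. Assume {φ ≤ r + 1} is compact and contained in V. Then there exists n₀ such that for all n ≥ n₀, lₙ ∩ {x ∈ V : φ(x) < r + 1/n} ⊆ Ω. -/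
/-!
Otherwise there are `n` arbitrarily large and points `xₙ ∈ lₙ \ Ω` in `V` with
`φ xₙ < r + 1/n ≤ r + 1`. By compactness of `{φ ≤ r + 1}` a subsequence converges to some `x₀ ∈ V`;
since the lines converge, `x₀ ∈ l`, and `φ x₀ ≤ r` by continuity. So `x₀ ∈ Ω`, and as `Ω` is open
the subsequence eventually enters `Ω`, a contradiction.
-/

open Filter Topology Set

section LineLimit

variable {𝕜 E : Type*} [NontriviallyNormedField 𝕜] [AddCommGroup E] [TopologicalSpace E]
  [IsTopologicalAddGroup E] [T2Space E] [Module 𝕜 E] [ContinuousSMul 𝕜 E] [SeparatingDual 𝕜 E]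

/-- A continuous functional `f` with `f v ≠ 0` recovers the parameters as
`f (xs i - as i) / f (vs i)`, so they converge as well. -/
theorem exists_eq_add_smul_of_tendsto {ι : Type*} {F : Filter ι} [F.NeBot]
    {as vs xs : ι → E} {ζs : ι → 𝕜} {a v x : E} (hv : v ≠ 0)
    (ha : Tendsto as F (𝓝 a)) (hvs : Tendsto vs F (𝓝 v)) (hx : Tendsto xs F (𝓝 x))
    (hxs : ∀ i, xs i = as i + ζs i • vs i) : ∃ ζ : 𝕜, x = a + ζ • v := by
  obtain ⟨f, hf⟩ := SeparatingDual.exists_ne_zero (R := 𝕜) hv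
  have hfv : Tendsto (fun i => f (vs i)) F (𝓝 (f v)) := (f.continuous.tendsto v).comp hvs
  have hζ : Tendsto ζs F (𝓝 (f (x - a) / f v)) := by
    refine (((f.continuous.tendsto _).comp (hx.sub ha)).div hfv hf).congr' ?_
    filter_upwards [hfv.eventually_ne hf] with i hi
    simp [hxs i, hi]
  refine ⟨f (x - a) / f v, tendsto_nhds_unique hx ?_⟩
  simpa only [← hxs] using ha.add (hζ.smul hvs)

end LineLimit

theorem stmt_17_general (V : Set (ℂ × ℂ)) (φ : ℂ × ℂ → ℝ)
    (hφ : ContinuousOn φ V) (r : ℝ)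
    (hcpt : IsCompact {x ∈ V | φ x ≤ r + 1})
    (aseq vseq : ℕ → ℂ × ℂ) (a v : ℂ × ℂ) (hv : v ≠ 0)
    (ha : Filter.Tendsto aseq Filter.atTop (nhds a))
    (hvlim : Filter.Tendsto vseq Filter.atTop (nhds v))
    (l : ℕ → Set (ℂ × ℂ))
    (hl : ∀ n, l n = {z : ℂ × ℂ | ∃ ζ : ℂ, z = aseq n + ζ • vseq n})
    (Ω : Set (ℂ × ℂ)) (hΩ : IsOpen Ω)
    (hlΩ : {z : ℂ × ℂ | ∃ ζ : ℂ, z = a + ζ • v} ∩ {x ∈ V | φ x ≤ r} ⊆ Ω) :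
    ∃ n₀ : ℕ, ∀ n ≥ n₀, l n ∩ {x ∈ V | φ x < r + 1 / n} ⊆ Ω := by
  by_contra! hbad
  obtain ⟨m, hm, hmbad⟩ := extraction_of_frequently_atTop (frequently_atTop.2 hbad)
  choose x hx hxΩ using fun k => not_subset.1 (hmbad k)
  choose ζ hζ using fun k => by simpa only [hl, mem_ofPred_eq] using (hx k).1
  have hxK : ∀ k, x k ∈ {x ∈ V | φ x ≤ r + 1} := fun k =>
    ⟨(hx k).2.1, (hx k).2.2.le.trans (by simpa using Nat.cast_inv_le_one (α := ℝ) (m k))⟩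
  obtain ⟨x₀, ⟨hx₀V, -⟩, ψ, hψ, hxψ⟩ := hcpt.tendsto_subseq hxK
  have hN : Tendsto (m ∘ ψ) atTop atTop := hm.tendsto_atTop.comp hψ.tendsto_atTop
  have hx₀l : ∃ ζ : ℂ, x₀ = a + ζ • v :=
    exists_eq_add_smul_of_tendsto hv (ha.comp hN) (hvlim.comp hN) hxψ fun k => hζ (ψ k)
  have hφx₀ : φ x₀ ≤ r := by
    have hφψ : Tendsto (φ ∘ x ∘ ψ) atTop (𝓝 (φ x₀)) :=
      (hφ x₀ hx₀V).tendsto.comp (tendsto_nhdsWithin_iff.2 ⟨hxψ, .of_forall fun k => (hx _).2.1⟩)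
    have hbound : Tendsto (fun k => r + 1 / (m (ψ k) : ℝ)) atTop (𝓝 r) := by
      simpa using (tendsto_const_nhds (x := r)).add
        ((tendsto_one_div_atTop_nhds_zero_nat (𝕜 := ℝ)).comp hN)
    exact le_of_tendsto_of_tendsto' hφψ hbound fun k => (hx (ψ k)).2.2.le
  obtain ⟨k, hk⟩ := (hxψ.eventually (hΩ.mem_nhds (hlΩ ⟨hx₀l, hx₀V, hφx₀⟩))).exists
  exact hxΩ (ψ k) hk

theorem stmt_17 (V : Set (ℂ × ℂ)) (hV : IsOpen V) (φ : ℂ × ℂ → ℝ)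
    (hφ : ContinuousOn φ V) (r : ℝ)
    (hcpt : IsCompact {x ∈ V | φ x ≤ r + 1}) (hKV : {x ∈ V | φ x ≤ r + 1} ⊆ V)
    (aseq vseq : ℕ → ℂ × ℂ) (a v : ℂ × ℂ) (hv : v ≠ 0)
    (ha : Filter.Tendsto aseq Filter.atTop (nhds a))
    (hvlim : Filter.Tendsto vseq Filter.atTop (nhds v))
    (l : ℕ → Set (ℂ × ℂ))
    (hl : ∀ n, l n = {z : ℂ × ℂ | ∃ ζ : ℂ, z = aseq n + ζ • vseq n})
    (Ω : Set (ℂ × ℂ)) (hΩ : IsOpen Ω)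
    (hlΩ : {z : ℂ × ℂ | ∃ ζ : ℂ, z = a + ζ • v} ∩ {x ∈ V | φ x ≤ r} ⊆ Ω) :
    ∃ n₀ : ℕ, ∀ n ≥ n₀, l n ∩ {x ∈ V | φ x < r + 1 / n} ⊆ Ω :=
  stmt_17_general V φ hφ r hcpt aseq vseq a v hv ha hvlim l hl Ω hΩ hlΩ
end
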